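/- Let $H$ be a self-adjoint operator on a Hilbert space whose lowest spectral point $\lambda_1 = \inf \sigma(H)$ is an isolated eigenvalue, and let $\mu \leq \inf(\sigma(H) \setminus \{\lambda_1\})$. If $\psi$ is a unit vector in the domain of $H$ with $\langle \psi, H\psi\rangle < \mu$, then $\lambda_1 \geq \langle \psi, H\psi\rangle - \frac{\langle H\psi, H\psi\rangle - \langle \psi, H\psi\rangle^2}{\mu - \langle \psi, H\psi\rangle}$. -/

import Mathlib

/-!
Since `λ₁ = inf σ(H)` and `σ(H) \ {λ₁} ⊆ [μ, ∞)`, the polynomial `p(x) = (x - λ₁)(x - μ)` is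
nonnegative on `σ(H)`. A quadratic spectral mapping argument shows that `p(H)` has nonnegative
spectrum, hence is a positive operator. Expanding `0 ≤ ⟪p(H)ψ, ψ⟫` for a unit vector `ψ` gives
`‖Hψ‖² - (λ₁ + μ)⟪ψ, Hψ⟫ + λ₁μ ≥ 0`, which rearranges to Temple's inequality.
-/

open ContinuousLinearMap

theorem sub_algebraMap_mul_sub_algebraMap_eq {K R : Type*} [CommRing K] [Ring R] [Algebra K R]
    (x : R) (a b : K) :
    (x - algebraMap K R a) * (x - algebraMap K R b) =
      x * x - (a + b) • x + algebraMap K R (a * b) := by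
  simp only [Algebra.algebraMap_eq_smul_one, sub_mul, mul_sub, smul_mul_assoc, mul_smul_comm,
    one_mul, mul_one]
  module

theorem IsSelfAdjoint.sub_algebraMap_mul_sub_algebraMap {R : Type*} [Ring R] [StarRing R]
    [Algebra ℝ R] [StarModule ℝ R] {x : R} (hx : IsSelfAdjoint x) (a b : ℝ) :
    IsSelfAdjoint ((x - algebraMap ℝ R a) * (x - algebraMap ℝ R b)) := by
  have hshift (r : ℝ) : IsSelfAdjoint (x - algebraMap ℝ R r) := hx.sub (.algebraMap R (.all r))
  refine ((hshift a).commute_iff (hshift b)).1 ?_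
  exact ((Commute.refl x).sub_right (Algebra.commute_algebraMap_right b x)).sub_left
    ((Algebra.commute_algebraMap_left a x).sub_right (Algebra.commute_algebraMap_left a _))

section

variable {E : Type*} [NormedAddCommGroup E] [InnerProductSpace ℝ E] [CompleteSpace E]

local notation "↑ₐ" => algebraMap ℝ (E →L[ℝ] E)

theorem IsSelfAdjoint.inner_sub_mul_sub_apply_self {A : E →L[ℝ] E} (hA : IsSelfAdjoint A)
    (a b : ℝ) (x : E) :
    inner ℝ (((A - ↑ₐ a) * (A - ↑ₐ b)) x) x
      = ‖A x‖ ^ 2 - (a + b) * inner ℝ x (A x) + a * b * ‖x‖ ^ 2 := by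
  rw [sub_algebraMap_mul_sub_algebraMap_eq, add_apply, sub_apply, mul_apply_eq_comp, smul_apply,
    ContinuousLinearMap.algebraMap_apply, inner_add_left, inner_sub_left,
    hA.isSymmetric.apply_clm, real_inner_smul_left, real_inner_smul_left,
    real_inner_self_eq_norm_sq, real_inner_self_eq_norm_sq, real_inner_comm]

theorem IsSelfAdjoint.isUnit_mul_self_add_algebraMap {A : E →L[ℝ] E} (hA : IsSelfAdjoint A)
    {q : ℝ} (hq : 0 < q) : IsUnit (A * A + ↑ₐ q) := by
  refine isUnit_of_forall_le_norm_inner_map _ (c := ⟨q, hq.le⟩) hq fun x => ?_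
  have hx : inner ℝ ((A * A + ↑ₐ q) x) x = ‖A x‖ ^ 2 + q * ‖x‖ ^ 2 := by
    rw [add_apply, mul_apply_eq_comp, ContinuousLinearMap.algebraMap_apply, inner_add_left,
      hA.isSymmetric.apply_clm, real_inner_smul_left, real_inner_self_eq_norm_sq,
      real_inner_self_eq_norm_sq]
  rw [hx, Real.norm_of_nonneg (by positivity)]
  change ‖x‖ ^ 2 * q ≤ _
  nlinarith [sq_nonneg ‖A x‖]

theorem IsSelfAdjoint.spectrum_sub_mul_sub_subset {A : E →L[ℝ] E} (hA : IsSelfAdjoint A)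
    (a b : ℝ) :
    spectrum ℝ ((A - ↑ₐ a) * (A - ↑ₐ b)) ⊆ (fun x => (x - a) * (x - b)) '' spectrum ℝ A := by
  intro μ hμ
  -- complete the square: `(x - a)(x - b) - μ = (x - c)² - D`
  set c := (a + b) / 2
  set D := ((a - b) / 2) ^ 2 + μ
  have hcomplete : ↑ₐ μ - (A - ↑ₐ a) * (A - ↑ₐ b) = ↑ₐ D - (A - ↑ₐ c) * (A - ↑ₐ c) := by
    rw [sub_algebraMap_mul_sub_algebraMap_eq, sub_algebraMap_mul_sub_algebraMap_eq]
    simp only [Algebra.algebraMap_eq_smul_one, c, D]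
    module
  rw [spectrum.mem_iff, hcomplete, IsUnit.sub_iff] at hμ
  rcases lt_or_ge D 0 with hD | hD
  · refine absurd ?_ hμ
    simpa [sub_eq_add_neg, ← map_neg] using
      (hA.sub (.algebraMap _ (.all c))).isUnit_mul_self_add_algebraMap (neg_pos.2 hD)
  · set s := √D
    have hfactor :
        (A - ↑ₐ c) * (A - ↑ₐ c) - ↑ₐ D = (A - ↑ₐ (c + s)) * (A - ↑ₐ (c - s)) := by
      rw [← Real.sq_sqrt hD, sub_algebraMap_mul_sub_algebraMap_eq,
        sub_algebraMap_mul_sub_algebraMap_eq]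
      simp only [Algebra.algebraMap_eq_smul_one]
      module
    have hroot (r : ℝ) (hr : (r - c) ^ 2 = D) (hu : ¬IsUnit (A - ↑ₐ r)) :
        μ ∈ (fun x => (x - a) * (x - b)) '' spectrum ℝ A := by
      refine ⟨r, by rwa [spectrum.mem_iff, IsUnit.sub_iff], ?_⟩
      simp only [c, D] at hr
      linear_combination hr
    rw [hfactor] at hμ
    by_cases hu : IsUnit (A - ↑ₐ (c + s))
    · exact hroot (c - s) (by simp [s, Real.sq_sqrt hD]) fun hu' => hμ (hu.mul hu')
    · exact hroot (c + s) (by simp [s, Real.sq_sqrt hD]) hu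

theorem IsSelfAdjoint.isPositive_of_spectrum_nonneg {T : E →L[ℝ] E} (hT : IsSelfAdjoint T)
    (h : ∀ x ∈ spectrum ℝ T, 0 ≤ x) : T.IsPositive := by
  refine (isPositive_iff' T).2 ⟨hT, fun x => ?_⟩
  rcases subsingleton_or_nontrivial E with hE | hE
  · simp [Subsingleton.elim x 0]
  -- `‖T‖ - T` has spectrum in `[0, ‖T‖]`, and the norm of a self-adjoint operator is its
  -- spectral radius
  set S := ↑ₐ ‖T‖ - T
  have hS : IsSelfAdjoint S := (IsSelfAdjoint.algebraMap _ (.all _)).sub hT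
  have hradius : spectralRadius ℝ S ≤ ‖T‖₊ := by
    refine iSup₂_le fun k hk => ?_
    rw [← spectrum.singleton_sub_eq] at hk
    obtain ⟨_, rfl, y, hy, rfl⟩ := hk
    have hy_le : y ≤ ‖T‖ := le_of_abs_le (spectrum.norm_le_norm_of_mem hy)
    have hy_nonneg := h y hy
    rw [ENNReal.coe_le_coe, ← NNReal.coe_le_coe, coe_nnnorm, coe_nnnorm, Real.norm_eq_abs,
      abs_of_nonneg (by linarith)]
    linarith
  have hSnorm : ‖S‖ ≤ ‖T‖ := by
    rwa [S.spectralRadius_eq_nnnorm hS, ENNReal.coe_le_coe, ← NNReal.coe_le_coe, coe_nnnorm,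
      coe_nnnorm] at hradius
  have hSx : inner ℝ (S x) x = ‖T‖ * ‖x‖ ^ 2 - inner ℝ (T x) x := by
    rw [sub_apply, ContinuousLinearMap.algebraMap_apply, inner_sub_left, real_inner_smul_left,
      real_inner_self_eq_norm_sq]
  have hSx_le : inner ℝ (S x) x ≤ ‖T‖ * ‖x‖ ^ 2 :=
    calc inner ℝ (S x) x ≤ ‖S x‖ * ‖x‖ := real_inner_le_norm _ _
      _ ≤ ‖S‖ * ‖x‖ * ‖x‖ := by gcongr; exact S.le_opNorm x
      _ ≤ ‖T‖ * ‖x‖ ^ 2 := by rw [mul_assoc, ← sq]; gcongr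
  linarith

theorem IsSelfAdjoint.isPositive_sub_mul_sub {A : E →L[ℝ] E} (hA : IsSelfAdjoint A) {a b : ℝ}
    (h : ∀ x ∈ spectrum ℝ A, 0 ≤ (x - a) * (x - b)) :
    ((A - ↑ₐ a) * (A - ↑ₐ b)).IsPositive := by
  refine (hA.sub_algebraMap_mul_sub_algebraMap a b).isPositive_of_spectrum_nonneg ?_
  rintro _ hμ
  obtain ⟨x, hx, rfl⟩ := hA.spectrum_sub_mul_sub_subset a b hμ
  exact h x hx

end

theorem stmt_3_general {E : Type*} [NormedAddCommGroup E] [InnerProductSpace ℝ E] [CompleteSpace E]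
    (H : E →L[ℝ] E) (hH : IsSelfAdjoint H)
    (lam1 : ℝ) (hlam1 : lam1 = sInf (spectrum ℝ H))
    (m : ℝ) (hm : ∀ x ∈ spectrum ℝ H, x ≠ lam1 → m ≤ x)
    (ψ : E) (hψ : ‖ψ‖ = 1) (hψm : (inner ℝ ψ (H ψ) : ℝ) < m) :
    lam1 ≥ (inner ℝ ψ (H ψ) : ℝ) -
      ((inner ℝ (H ψ) (H ψ) : ℝ) - (inner ℝ ψ (H ψ) : ℝ) ^ 2) / (m - (inner ℝ ψ (H ψ) : ℝ)) := by
  have hspectrum : ∀ x ∈ spectrum ℝ H, 0 ≤ (x - lam1) * (x - m) := by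
    intro x hx
    obtain rfl | hne := eq_or_ne x lam1
    · simp
    have hlam1_le : lam1 ≤ x := hlam1 ▸ csInf_le (spectrum.isCompact H).bddBelow hx
    nlinarith [hm x hx hne]
  have key := (hH.isPositive_sub_mul_sub hspectrum).inner_nonneg_left ψ
  rw [hH.inner_sub_mul_sub_apply_self, hψ, ← real_inner_self_eq_norm_sq] at key
  rw [ge_iff_le, sub_le_comm, le_div_iff₀ (sub_pos.2 hψm)]
  nlinarith

/-- Temple's inequality for a self-adjoint operator whose lowest spectral point is an
isolated eigenvalue. -/
theorem stmt_3 {E : Type*} [NormedAddCommGroup E] [InnerProductSpace ℝ E] [CompleteSpace E]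
    (H : E →L[ℝ] E) (hH : IsSelfAdjoint H)
    (lam1 : ℝ) (hlam1 : lam1 = sInf (spectrum ℝ H))
    (heig : Module.End.HasEigenvalue (H : Module.End ℝ E) lam1)
    (hisol : ∃ ε > 0, ∀ x ∈ spectrum ℝ H, x ≠ lam1 → lam1 + ε ≤ x)
    (m : ℝ) (hm : ∀ x ∈ spectrum ℝ H, x ≠ lam1 → m ≤ x)
    (ψ : E) (hψ : ‖ψ‖ = 1) (hψm : (inner ℝ ψ (H ψ) : ℝ) < m) :
    lam1 ≥ (inner ℝ ψ (H ψ) : ℝ) -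
      ((inner ℝ (H ψ) (H ψ) : ℝ) - (inner ℝ ψ (H ψ) : ℝ) ^ 2) / (m - (inner ℝ ψ (H ψ) : ℝ)) :=
  stmt_3_general H hH lam1 hlam1 m hm ψ hψ hψm
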